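/- Let F be a face of Q, let a_F ∈ F satisfy a_F + Q^F ⊆ Q, and let a ∈ F. Suppose β ∈ ℤ^d satisfies τ_i(a + a_F + β) ≤ 0 for every index i such that τ_i does not vanish identically on F. Then (β + Q) ∩ Q = (a + β + Q) ∩ Q. -/

import Mathlib

/-!
For `x = β + q ∈ Q` with `q ∈ Q`, membership in `a + β + Q` means `q - a ∈ Q`. The element
`y = q - a - a_F` lies in `Q + F^gp`, and it lies in `Q^sat`: a functional vanishing on `F` sees
only `q`, and any other one satisfies `τ(y) ≥ τ(q) + τ(β) = τ(x) ≥ 0` by the hypothesis on `β`.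
Hence `a_F + y = q - a ∈ Q`. The reverse inclusion only needs `a ∈ Q`.
-/

/-- The shift `α + S = {α + s : s ∈ S}` of a set `S ⊆ ℤ^d` by `α ∈ ℤ^d`. -/
def shiftSet {d : ℕ} (α : Fin d → ℤ) (S : Set (Fin d → ℤ)) : Set (Fin d → ℤ) :=
  (α + ·) '' S

/-- A face of `Q`: a submonoid `F ⊆ Q` such that `a + b ∈ F` with `a, b ∈ Q` forces
`a ∈ F` and `b ∈ F`. -/
def IsFaceOfMonoid {d : ℕ} (Q F : AddSubmonoid (Fin d → ℤ)) : Prop :=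
  (F : Set (Fin d → ℤ)) ⊆ (Q : Set (Fin d → ℤ)) ∧
    ∀ a ∈ Q, ∀ b ∈ Q, a + b ∈ F → a ∈ F ∧ b ∈ F

/-- The saturation `Q^sat = {x ∈ ℤ^d : n • x ∈ Q for some integer n ≥ 1}`. -/
def saturationOf {d : ℕ} (Q : AddSubmonoid (Fin d → ℤ)) : Set (Fin d → ℤ) :=
  {x | ∃ n : ℕ, 1 ≤ n ∧ n • x ∈ Q}

/-- The partial saturation `Q^F = (Q + F^gp) ∩ Q^sat` of `Q` at a face `F`. -/
def partialSat {d : ℕ} (Q F : AddSubmonoid (Fin d → ℤ)) : Set (Fin d → ℤ) :=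
  {x | ∃ q ∈ Q, ∃ g ∈ AddSubgroup.closure (F : Set (Fin d → ℤ)), x = q + g} ∩
    saturationOf Q

theorem mem_shiftSet {d : ℕ} {α x : Fin d → ℤ} {S : Set (Fin d → ℤ)} :
    x ∈ shiftSet α S ↔ x - α ∈ S := by
  simp [shiftSet, neg_add_eq_sub]

theorem shiftSet_add_subset {d : ℕ} {Q : AddSubmonoid (Fin d → ℤ)} {a : Fin d → ℤ} (ha : a ∈ Q)
    (β : Fin d → ℤ) : shiftSet (a + β) (Q : Set (Fin d → ℤ)) ⊆ shiftSet β Q := by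
  rintro _ ⟨q, hq, rfl⟩
  exact ⟨a + q, Q.add_mem ha hq, (add_left_comm β a q).trans (add_assoc a β q).symm⟩

theorem map_sub_nonneg_of_nonneg_or_vanishes_on {G : Type*} [AddCommGroup G] (τ : G →+ ℤ)
    {Q : AddSubmonoid G} (hτQ : ∀ x ∈ Q, 0 ≤ τ x) {F : AddSubmonoid G} {c β q : G} (hc : c ∈ F)
    (hβ : ¬ (∀ x ∈ F, τ x = 0) → τ (c + β) ≤ 0) (hq : q ∈ Q) (hβq : β + q ∈ Q) :
    0 ≤ τ (q - c) := by
  have hτq := hτQ q hq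
  have hτβq := hτQ _ hβq
  rw [map_sub]
  rw [map_add] at hβ hτβq
  by_cases hvan : ∀ x ∈ F, τ x = 0
  · linarith [hvan c hc]
  · linarith [hβ hvan]

theorem sub_mem_of_partialSat {d : ℕ} {Q F : AddSubmonoid (Fin d → ℤ)} {aF c q : Fin d → ℤ}
    (haFQ : ∀ x ∈ partialSat Q F, aF + x ∈ Q) (hc : c ∈ F) (haF : aF ∈ F) (hq : q ∈ Q)
    (hsat : q - (c + aF) ∈ saturationOf Q) : q - c ∈ Q := by
  have hcaF : -(c + aF) ∈ AddSubgroup.closure (F : Set (Fin d → ℤ)) :=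
    neg_mem (add_mem (AddSubgroup.subset_closure hc) (AddSubgroup.subset_closure haF))
  have := haFQ _ ⟨⟨q, hq, _, hcaF, sub_eq_add_neg _ _⟩, hsat⟩
  convert this using 1
  abel

theorem stmt10_general {d r : ℕ} (Q : AddSubmonoid (Fin d → ℤ))
    (τ : Fin r → ((Fin d → ℤ) →+ ℤ))
    (hτQ : ∀ i, ∀ x ∈ Q, 0 ≤ τ i x)
    (hsat : saturationOf Q = {x : Fin d → ℤ | ∀ i, 0 ≤ τ i x})
    (F : AddSubmonoid (Fin d → ℤ)) (hF : IsFaceOfMonoid Q F)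
    (aF : Fin d → ℤ) (haF : aF ∈ F)
    (haFQ : ∀ x ∈ partialSat Q F, aF + x ∈ Q)
    (a : Fin d → ℤ) (ha : a ∈ F)
    (β : Fin d → ℤ)
    (hβ : ∀ i, ¬ (∀ x ∈ F, τ i x = 0) → τ i (a + aF + β) ≤ 0) :
    shiftSet β (Q : Set (Fin d → ℤ)) ∩ (Q : Set (Fin d → ℤ)) =
      shiftSet (a + β) (Q : Set (Fin d → ℤ)) ∩ (Q : Set (Fin d → ℤ)) := by
  refine Set.Subset.antisymm ?_ (Set.inter_subset_inter_left _ (shiftSet_add_subset (hF.1 ha) β))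
  rintro x ⟨hxβ, hx⟩
  refine ⟨?_, hx⟩
  rw [mem_shiftSet] at hxβ ⊢
  have hsat' : x - β - (a + aF) ∈ saturationOf Q := by
    rw [hsat]
    exact fun i ↦ map_sub_nonneg_of_nonneg_or_vanishes_on (τ i) (hτQ i)
      (F.add_mem ha haF) (hβ i) hxβ (by simpa using hx)
  simpa [sub_sub, add_comm β] using sub_mem_of_partialSat haFQ ha haF hxβ hsat'

/-- Let `F` be a face of `Q`, let `a_F ∈ F` satisfy `a_F + Q^F ⊆ Q`, and let `a ∈ F`.
Suppose `β ∈ ℤ^d` satisfies `τ_i(a + a_F + β) ≤ 0` for every `i` such that `τ_i` does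
not vanish identically on `F`.  Then `(β + Q) ∩ Q = (a + β + Q) ∩ Q`. -/
theorem stmt10 {d r : ℕ} (Q : AddSubmonoid (Fin d → ℤ)) (hFG : Q.FG)
    (hgp : AddSubgroup.closure (Q : Set (Fin d → ℤ)) = ⊤)
    (τ : Fin r → ((Fin d → ℤ) →+ ℤ))
    (hτQ : ∀ i, ∀ x ∈ Q, 0 ≤ τ i x)
    (hsat : saturationOf Q = {x : Fin d → ℤ | ∀ i, 0 ≤ τ i x})
    (F : AddSubmonoid (Fin d → ℤ)) (hF : IsFaceOfMonoid Q F)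
    (aF : Fin d → ℤ) (haF : aF ∈ F)
    (haFQ : ∀ x ∈ partialSat Q F, aF + x ∈ Q)
    (a : Fin d → ℤ) (ha : a ∈ F)
    (β : Fin d → ℤ)
    (hβ : ∀ i, ¬ (∀ x ∈ F, τ i x = 0) → τ i (a + aF + β) ≤ 0) :
    shiftSet β (Q : Set (Fin d → ℤ)) ∩ (Q : Set (Fin d → ℤ)) =
      shiftSet (a + β) (Q : Set (Fin d → ℤ)) ∩ (Q : Set (Fin d → ℤ)) :=
  stmt10_general Q τ hτQ hsat F hF aF haF haFQ a ha β hβ
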